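/- Sufficiency in the closed-loop design separation (Corollary 14, converse direction): Let K := RatFunc ℝ with z := RatFunc.X, let A : n×n and B : n×m be real matrices over K, and let Φx : n×n, Φu : m×n, P_c : n×n, M_c : m×n be matrices over K satisfying (z•1 − A) * Φx − B * Φu = 1, Φx * Δc = P_c and Φu * Δc = M_c, where Δc := (z•1 − A) * P_c − B * M_c is assumed invertible. Then, with R := [[A + (1−z)•1, B, 0],[0, 0, z•M_c],[1, 0, 1 − z•P_c]], the matrix S := [[Φx, Φx*B, Φx*(z•1−A) − 1],[Φu, 1 + Φu*B, Φu*(z•1−A)],[z⁻¹•Δc⁻¹, z⁻¹•(Δc⁻¹ * B), z⁻¹•(Δc⁻¹ * (z•1−A))]] satisfies S * (1 − R) = 1 and (1 − R) * S = 1. -/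

import Mathlib

/-! Writing `E = z • 1 - A`, one has `1 - R = [[E, -B, 0], [0, 1, -z • M_c], [-1, 0, z • P_c]]`.
Block multiplication reduces `S * (1 - R) = 1` to `Φx * Δc = P_c`, `Φu * Δc = M_c` and
`Δc⁻¹ * Δc = 1`, all other blocks cancelling termwise; a one-sided inverse of a square matrix
over a field is two-sided. -/

open Matrix

noncomputable section

set_option synthInstance.maxHeartbeats 1000000
set_option maxHeartbeats 1000000

/-- A 3×3 block matrix. -/
def b3 {α n₁ n₂ n₃ m₁ m₂ m₃ : Type*}
    (M₁₁ : Matrix n₁ m₁ α) (M₁₂ : Matrix n₁ m₂ α) (M₁₃ : Matrix n₁ m₃ α)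
    (M₂₁ : Matrix n₂ m₁ α) (M₂₂ : Matrix n₂ m₂ α) (M₂₃ : Matrix n₂ m₃ α)
    (M₃₁ : Matrix n₃ m₁ α) (M₃₂ : Matrix n₃ m₂ α) (M₃₃ : Matrix n₃ m₃ α) :
    Matrix (n₁ ⊕ n₂ ⊕ n₃) (m₁ ⊕ m₂ ⊕ m₃) α :=
  Matrix.fromBlocks M₁₁ (Matrix.fromCols M₁₂ M₁₃)
    (Matrix.fromRows M₂₁ M₃₁) (Matrix.fromBlocks M₂₂ M₂₃ M₃₂ M₃₃)

/-- A real constant matrix regarded as a matrix of rational transfer functions. -/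
def mR {n m : Type*} (M : Matrix n m ℝ) : Matrix n m (RatFunc ℝ) :=
  M.map (algebraMap ℝ (RatFunc ℝ))

/-- The transfer-function variable `z`. -/
def zz : RatFunc ℝ := RatFunc.X

section BlockAlgebra

variable {α n₁ n₂ n₃ m₁ m₂ m₃ p₁ p₂ p₃ : Type*}

theorem b3_one [Zero α] [One α] [DecidableEq n₁] [DecidableEq n₂] [DecidableEq n₃] :
    b3 (1 : Matrix n₁ n₁ α) 0 0 0 (1 : Matrix n₂ n₂ α) 0 0 0 (1 : Matrix n₃ n₃ α) = 1 := by
  ext (i | i | i) (j | j | j) <;> simp [b3, one_apply]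

theorem b3_mul [NonUnitalNonAssocSemiring α] [Fintype m₁] [Fintype m₂] [Fintype m₃]
    (A₁₁ : Matrix n₁ m₁ α) (A₁₂ : Matrix n₁ m₂ α) (A₁₃ : Matrix n₁ m₃ α)
    (A₂₁ : Matrix n₂ m₁ α) (A₂₂ : Matrix n₂ m₂ α) (A₂₃ : Matrix n₂ m₃ α)
    (A₃₁ : Matrix n₃ m₁ α) (A₃₂ : Matrix n₃ m₂ α) (A₃₃ : Matrix n₃ m₃ α)
    (B₁₁ : Matrix m₁ p₁ α) (B₁₂ : Matrix m₁ p₂ α) (B₁₃ : Matrix m₁ p₃ α)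
    (B₂₁ : Matrix m₂ p₁ α) (B₂₂ : Matrix m₂ p₂ α) (B₂₃ : Matrix m₂ p₃ α)
    (B₃₁ : Matrix m₃ p₁ α) (B₃₂ : Matrix m₃ p₂ α) (B₃₃ : Matrix m₃ p₃ α) :
    b3 A₁₁ A₁₂ A₁₃ A₂₁ A₂₂ A₂₃ A₃₁ A₃₂ A₃₃ * b3 B₁₁ B₁₂ B₁₃ B₂₁ B₂₂ B₂₃ B₃₁ B₃₂ B₃₃ =
      b3 (A₁₁ * B₁₁ + A₁₂ * B₂₁ + A₁₃ * B₃₁) (A₁₁ * B₁₂ + A₁₂ * B₂₂ + A₁₃ * B₃₂)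
        (A₁₁ * B₁₃ + A₁₂ * B₂₃ + A₁₃ * B₃₃)
        (A₂₁ * B₁₁ + A₂₂ * B₂₁ + A₂₃ * B₃₁) (A₂₁ * B₁₂ + A₂₂ * B₂₂ + A₂₃ * B₃₂)
        (A₂₁ * B₁₃ + A₂₂ * B₂₃ + A₂₃ * B₃₃)
        (A₃₁ * B₁₁ + A₃₂ * B₂₁ + A₃₃ * B₃₁) (A₃₁ * B₁₂ + A₃₂ * B₂₂ + A₃₃ * B₃₂)
        (A₃₁ * B₁₃ + A₃₂ * B₂₃ + A₃₃ * B₃₃) := by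
  ext (i | i | i) (j | j | j) <;>
    simp [b3, mul_apply, Fintype.sum_sum_type, add_assoc]

end BlockAlgebra

section Realization

variable {K : Type*} [CommRing K] {n m : Type*} [DecidableEq n]

def slsRealization (z : K) (A : Matrix n n K) (B : Matrix n m K) (P : Matrix n n K)
    (M : Matrix m n K) : Matrix (n ⊕ m ⊕ n) (n ⊕ m ⊕ n) K :=
  b3 (A + (1 - z) • 1) B 0 0 0 (z • M) 1 0 (1 - z • P)

theorem one_sub_slsRealization [DecidableEq m] (z : K) (A : Matrix n n K) (B : Matrix n m K)
    (P : Matrix n n K) (M : Matrix m n K) :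
    1 - slsRealization z A B P M = b3 (z • 1 - A) (-B) 0 0 1 (-(z • M)) (-1) 0 (z • P) := by
  ext (i | i | i) (j | j | j) <;> simp [slsRealization, b3, one_apply, sub_smul]
  ring

end Realization

section ClosedLoop

variable {K : Type*} [Field K] {n m : Type*} [Fintype n] [DecidableEq n] [DecidableEq m]

def slsClosedLoop (z : K) (A : Matrix n n K) (B : Matrix n m K) (Φx : Matrix n n K)
    (Φu : Matrix m n K) (Δ : Matrix n n K) : Matrix (n ⊕ m ⊕ n) (n ⊕ m ⊕ n) K :=
  b3 Φx (Φx * B) (Φx * (z • 1 - A) - 1) Φu (1 + Φu * B) (Φu * (z • 1 - A))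
    (z⁻¹ • Δ⁻¹) (z⁻¹ • (Δ⁻¹ * B)) (z⁻¹ • (Δ⁻¹ * (z • 1 - A)))

variable [Fintype m]

theorem slsClosedLoop_mul_one_sub_slsRealization {z : K} (hz : z ≠ 0) {A : Matrix n n K}
    {B : Matrix n m K} {Φx P : Matrix n n K} {Φu M : Matrix m n K}
    (hP : Φx * ((z • 1 - A) * P - B * M) = P) (hM : Φu * ((z • 1 - A) * P - B * M) = M)
    (hΔ : IsUnit ((z • 1 - A) * P - B * M)) :
    slsClosedLoop z A B Φx Φu ((z • 1 - A) * P - B * M) * (1 - slsRealization z A B P M) = 1 := by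
  rw [one_sub_slsRealization, slsClosedLoop, b3_mul, ← b3_one]
  set E := z • (1 : Matrix n n K) - A
  set Δ := E * P - B * M with hΔdef
  congr 1 <;> simp only [Matrix.mul_zero, Matrix.mul_one, Matrix.mul_neg, add_zero, zero_add,
    Matrix.smul_mul, Matrix.mul_smul]
  · abel
  · exact neg_add_cancel _
  · calc _ = z • (Φx * Δ - P) := by
          simp only [hΔdef, Matrix.mul_sub, Matrix.sub_mul, Matrix.mul_assoc, Matrix.one_mul]
          module
      _ = 0 := by rw [hP, sub_self, smul_zero]
  · exact add_neg_cancel _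
  · abel
  · calc _ = z • (Φu * Δ - M) := by
          simp only [hΔdef, Matrix.mul_sub, Matrix.add_mul, Matrix.mul_assoc, Matrix.one_mul]
          module
      _ = 0 := by rw [hM, sub_self, smul_zero]
  · exact add_neg_cancel _
  · exact neg_add_cancel _
  · calc _ = Δ⁻¹ * Δ := by
          simp only [smul_smul, mul_inv_cancel₀ hz, one_smul, hΔdef, Matrix.mul_sub, Matrix.mul_assoc]
          abel
      _ = 1 := nonsing_inv_mul Δ ((isUnit_iff_isUnit_det Δ).mp hΔ)

end ClosedLoop

theorem closed_loop_separation_sufficiency_general {n m : Type*} [Fintype n] [Fintype m]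
    [DecidableEq n] [DecidableEq m]
    (A : Matrix n n ℝ) (B : Matrix n m ℝ)
    (Φx : Matrix n n (RatFunc ℝ)) (Φu : Matrix m n (RatFunc ℝ))
    (Pc : Matrix n n (RatFunc ℝ)) (Mc : Matrix m n (RatFunc ℝ))
    (hP : Φx * ((zz • (1 : Matrix n n (RatFunc ℝ)) - mR A) * Pc - mR B * Mc) = Pc)
    (hM : Φu * ((zz • (1 : Matrix n n (RatFunc ℝ)) - mR A) * Pc - mR B * Mc) = Mc)
    (hΔ : IsUnit ((zz • (1 : Matrix n n (RatFunc ℝ)) - mR A) * Pc - mR B * Mc)) :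
    let Δc := (zz • (1 : Matrix n n (RatFunc ℝ)) - mR A) * Pc - mR B * Mc
    let Rr := b3 (mR A + (1 - zz) • (1 : Matrix n n (RatFunc ℝ))) (mR B)
        (0 : Matrix n n (RatFunc ℝ))
        (0 : Matrix m n (RatFunc ℝ)) (0 : Matrix m m (RatFunc ℝ)) (zz • Mc)
        (1 : Matrix n n (RatFunc ℝ)) (0 : Matrix n m (RatFunc ℝ))
        ((1 : Matrix n n (RatFunc ℝ)) - zz • Pc)
    let Sr := b3 Φx (Φx * mR B) (Φx * (zz • (1 : Matrix n n (RatFunc ℝ)) - mR A) - 1)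
        Φu (1 + Φu * mR B) (Φu * (zz • (1 : Matrix n n (RatFunc ℝ)) - mR A))
        (zz⁻¹ • Δc⁻¹) (zz⁻¹ • (Δc⁻¹ * mR B))
        (zz⁻¹ • (Δc⁻¹ * (zz • (1 : Matrix n n (RatFunc ℝ)) - mR A)))
    Sr * (1 - Rr) = 1 ∧ (1 - Rr) * Sr = 1 := by
  intro Δc Rr Sr
  have hS : Sr * (1 - Rr) = 1 :=
    slsClosedLoop_mul_one_sub_slsRealization RatFunc.X_ne_zero hP hM hΔ
  exact ⟨hS, mul_eq_one_comm.mp hS⟩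

/-- **Sufficiency in the closed-loop design separation** (Corollary 14, converse
direction).  If `(Φx, Φu)` satisfy the SLP constraint, `(P_c, M_c)` realize
`(Φx, Φu)` in the sense `Φx Δc = P_c`, `Φu Δc = M_c` with
`Δc := (z•1 - A) P_c - B M_c` invertible, then the exhibited matrix `S` is a two-sided
inverse of `1 - R` for the realization `R` of Fig. 8. -/
theorem closed_loop_separation_sufficiency {n m : Type*} [Fintype n] [Fintype m]
    [DecidableEq n] [DecidableEq m]
    (A : Matrix n n ℝ) (B : Matrix n m ℝ)
    (Φx : Matrix n n (RatFunc ℝ)) (Φu : Matrix m n (RatFunc ℝ))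
    (Pc : Matrix n n (RatFunc ℝ)) (Mc : Matrix m n (RatFunc ℝ))
    (hSLP : (zz • (1 : Matrix n n (RatFunc ℝ)) - mR A) * Φx - mR B * Φu = 1)
    (hP : Φx * ((zz • (1 : Matrix n n (RatFunc ℝ)) - mR A) * Pc - mR B * Mc) = Pc)
    (hM : Φu * ((zz • (1 : Matrix n n (RatFunc ℝ)) - mR A) * Pc - mR B * Mc) = Mc)
    (hΔ : IsUnit ((zz • (1 : Matrix n n (RatFunc ℝ)) - mR A) * Pc - mR B * Mc)) :
    let Δc := (zz • (1 : Matrix n n (RatFunc ℝ)) - mR A) * Pc - mR B * Mc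
    let Rr := b3 (mR A + (1 - zz) • (1 : Matrix n n (RatFunc ℝ))) (mR B)
        (0 : Matrix n n (RatFunc ℝ))
        (0 : Matrix m n (RatFunc ℝ)) (0 : Matrix m m (RatFunc ℝ)) (zz • Mc)
        (1 : Matrix n n (RatFunc ℝ)) (0 : Matrix n m (RatFunc ℝ))
        ((1 : Matrix n n (RatFunc ℝ)) - zz • Pc)
    let Sr := b3 Φx (Φx * mR B) (Φx * (zz • (1 : Matrix n n (RatFunc ℝ)) - mR A) - 1)
        Φu (1 + Φu * mR B) (Φu * (zz • (1 : Matrix n n (RatFunc ℝ)) - mR A))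
        (zz⁻¹ • Δc⁻¹) (zz⁻¹ • (Δc⁻¹ * mR B))
        (zz⁻¹ • (Δc⁻¹ * (zz • (1 : Matrix n n (RatFunc ℝ)) - mR A)))
    Sr * (1 - Rr) = 1 ∧ (1 - Rr) * Sr = 1 :=
  closed_loop_separation_sufficiency_general A B Φx Φu Pc Mc hP hM hΔ

end
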